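/- Let S, P_A, P_B be unital complex algebras, let ω be a linear functional on S and σ_A, σ_B linear functionals on P_A, P_B with σ_A(1) = 1, and let Θ_A, Θ_B be unital algebra automorphisms of S⊗P_A and S⊗P_B. Order the tensor product as S⊗P_B⊗P_A, let Θ̂_B := Θ_B⊗id_{P_A} act on the first two factors and let Θ̂_A act as Θ_A on the first and third factors and as the identity on P_B. Then for every O_B ∈ P_B: (ω⊗σ_B⊗σ_A)((Θ̂_B ∘ Θ̂_A)(1⊗O_B⊗1)) = ω(ε_B(O_B)), where ε_B(O) := (id_S⊗σ_B)(Θ_B(1⊗O)). That is, a measurement coupled only after B's measurement does not influence B's expected outcome: there is no influence from the future to the past. -/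

import Mathlib

/-! `Θ̂_A` touches only `S` and `P_A` and is unital, so it fixes `1 ⊗ O_B ⊗ 1`. Applying `Θ̂_B`
then leaves `Θ_B(1 ⊗ O_B) ⊗ 1`, and since `σ_A(1) = 1` the functional reduces to `ω ⊗ σ_B`,
which factors as `ω ∘ (id_S ⊗ σ_B)`. -/

open scoped TensorProduct

noncomputable section

variable {S PA PB : Type*} [Ring S] [Algebra ℂ S]
  [Ring PA] [Algebra ℂ PA] [Ring PB] [Algebra ℂ PB]

/-- The tensor product `ω ⊗ σ` of two linear functionals, determined by
`(ω ⊗ σ)(a ⊗ b) = ω a * σ b`. -/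
def tensorFunctional {A B : Type*} [Ring A] [Algebra ℂ A]
    [Ring B] [Algebra ℂ B] (ω : A →ₗ[ℂ] ℂ) (σ : B →ₗ[ℂ] ℂ) :
    A ⊗[ℂ] B →ₗ[ℂ] ℂ :=
  (TensorProduct.lid ℂ ℂ).toLinearMap.comp (TensorProduct.map ω σ)

/-- The partial trace `id_S ⊗ σ : S ⊗ P →ₗ S`, determined by `a ⊗ b ↦ σ(b) • a`. -/
def idTensorFunctional (S : Type*) [Ring S] [Algebra ℂ S] {P : Type*}
    [Ring P] [Algebra ℂ P] (σ : P →ₗ[ℂ] ℂ) : S ⊗[ℂ] P →ₗ[ℂ] S :=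
  (TensorProduct.rid ℂ S).toLinearMap.comp (TensorProduct.map LinearMap.id σ)

/-- The rearrangement isomorphism `(S ⊗ P_A) ⊗ P_B ≃ (S ⊗ P_B) ⊗ P_A`
exchanging the two probe factors. -/
def probeSwap (S PA PB : Type*) [Ring S] [Algebra ℂ S]
    [Ring PA] [Algebra ℂ PA] [Ring PB] [Algebra ℂ PB] :
    ((S ⊗[ℂ] PA) ⊗[ℂ] PB) ≃ₐ[ℂ] ((S ⊗[ℂ] PB) ⊗[ℂ] PA) :=
  (Algebra.TensorProduct.assoc ℂ ℂ ℂ S PA PB).trans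
    ((Algebra.TensorProduct.congr AlgEquiv.refl
        (Algebra.TensorProduct.comm ℂ PA PB)).trans
      (Algebra.TensorProduct.assoc ℂ ℂ ℂ S PB PA).symm)

/-- The extension `Θ̂_A` of an automorphism `Θ_A` of `S ⊗ P_A` to
`(S ⊗ P_A) ⊗ P_B`, acting trivially on `P_B`. -/
def hatA (ΘA : (S ⊗[ℂ] PA) ≃ₐ[ℂ] (S ⊗[ℂ] PA)) :
    ((S ⊗[ℂ] PA) ⊗[ℂ] PB) ≃ₐ[ℂ] ((S ⊗[ℂ] PA) ⊗[ℂ] PB) :=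
  Algebra.TensorProduct.congr ΘA AlgEquiv.refl

/-- The extension `Θ̂_B` of an automorphism `Θ_B` of `S ⊗ P_B` to
`(S ⊗ P_A) ⊗ P_B`, acting on the first and third tensor factors and trivially
on `P_A`. -/
def hatB (ΘB : (S ⊗[ℂ] PB) ≃ₐ[ℂ] (S ⊗[ℂ] PB)) :
    ((S ⊗[ℂ] PA) ⊗[ℂ] PB) ≃ₐ[ℂ] ((S ⊗[ℂ] PA) ⊗[ℂ] PB) :=
  (probeSwap S PA PB).trans ((Algebra.TensorProduct.congr ΘB AlgEquiv.refl).trans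
    (probeSwap S PA PB).symm)

/-- The induced system observable `ε(O) = (id_S ⊗ σ)(Θ (1 ⊗ O))` of a probe
observable `O`. -/
def inducedObservable {P : Type*} [Ring P] [Algebra ℂ P] (σ : P →ₗ[ℂ] ℂ)
    (Θ : (S ⊗[ℂ] P) ≃ₐ[ℂ] (S ⊗[ℂ] P)) (O : P) : S :=
  idTensorFunctional S σ (Θ ((1 : S) ⊗ₜ[ℂ] O))

theorem tensorFunctional_tmul {A B : Type*} [Ring A] [Algebra ℂ A] [Ring B] [Algebra ℂ B]
    (ω : A →ₗ[ℂ] ℂ) (σ : B →ₗ[ℂ] ℂ) (a : A) (b : B) :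
    tensorFunctional ω σ (a ⊗ₜ[ℂ] b) = ω a * σ b := by
  simp [tensorFunctional]

theorem tensorFunctional_eq_comp_idTensorFunctional (ω : S →ₗ[ℂ] ℂ) (σ : PB →ₗ[ℂ] ℂ) :
    tensorFunctional ω σ = ω ∘ₗ idTensorFunctional S σ := by
  ext a b
  simp [tensorFunctional_tmul, idTensorFunctional, mul_comm]

theorem probeSwap_tmul (s : S) (a : PA) (b : PB) :
    probeSwap S PA PB ((s ⊗ₜ[ℂ] a) ⊗ₜ[ℂ] b) = (s ⊗ₜ[ℂ] b) ⊗ₜ[ℂ] a := by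
  simp [probeSwap]

theorem probeSwap_symm_tmul (s : S) (a : PA) (b : PB) :
    (probeSwap S PA PB).symm ((s ⊗ₜ[ℂ] b) ⊗ₜ[ℂ] a) = (s ⊗ₜ[ℂ] a) ⊗ₜ[ℂ] b := by
  rw [AlgEquiv.symm_apply_eq, probeSwap_tmul]

theorem hatA_tmul (ΘA : (S ⊗[ℂ] PA) ≃ₐ[ℂ] (S ⊗[ℂ] PA)) (x : S ⊗[ℂ] PA) (b : PB) :
    hatA ΘA (x ⊗ₜ[ℂ] b) = ΘA x ⊗ₜ[ℂ] b :=
  rfl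

theorem hatB_one_tmul_tmul_one (ΘB : (S ⊗[ℂ] PB) ≃ₐ[ℂ] (S ⊗[ℂ] PB)) (a : PA) :
    hatB ΘB (((1 : S) ⊗ₜ[ℂ] a) ⊗ₜ[ℂ] (1 : PB)) = ((1 : S) ⊗ₜ[ℂ] a) ⊗ₜ[ℂ] (1 : PB) := by
  have hΘB : ΘB ((1 : S) ⊗ₜ[ℂ] (1 : PB)) = (1 : S) ⊗ₜ[ℂ] (1 : PB) := map_one ΘB
  simp only [hatB, AlgEquiv.trans_apply, probeSwap_tmul, Algebra.TensorProduct.congr_apply,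
    Algebra.TensorProduct.map_tmul, AlgEquiv.coe_toAlgHom, hΘB, AlgEquiv.coe_refl, id,
    probeSwap_symm_tmul]

/-- No influence from the future to the past: with the tensor product ordered
as `S ⊗ P_B ⊗ P_A`, where `Θ̂_B = Θ_B ⊗ id` acts on the first two factors and
`Θ̂_A` acts on the first and third factors, a measurement coupled only after
`B`'s measurement does not influence `B`'s expected outcome:
`(ω ⊗ σ_B ⊗ σ_A)((Θ̂_B ∘ Θ̂_A)(1 ⊗ O_B ⊗ 1)) = ω(ε_B(O_B))`. -/
theorem no_influence_from_future
    (ω : S →ₗ[ℂ] ℂ) (σA : PA →ₗ[ℂ] ℂ) (σB : PB →ₗ[ℂ] ℂ) (hσA : σA 1 = 1)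
    (ΘA : (S ⊗[ℂ] PA) ≃ₐ[ℂ] (S ⊗[ℂ] PA)) (ΘB : (S ⊗[ℂ] PB) ≃ₐ[ℂ] (S ⊗[ℂ] PB))
    (OB : PB) :
    tensorFunctional (tensorFunctional ω σB) σA
      ((hatA ΘB) ((hatB (PA := PB) ΘA) (((1 : S) ⊗ₜ[ℂ] OB) ⊗ₜ[ℂ] (1 : PA))))
    = ω (inducedObservable σB ΘB OB) := by
  rw [hatB_one_tmul_tmul_one, hatA_tmul, tensorFunctional_tmul, hσA, mul_one,
    tensorFunctional_eq_comp_idTensorFunctional, LinearMap.comp_apply, inducedObservable]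

end
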